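/- Let d ≥ 1, let X₁,…,Xₙ be i.i.d. ℝ^d-valued random variables whose common law has density f with respect to Lebesgue measure, let H be an invertible d×d real matrix, and let K : ℝ^d → ℝ be bounded, measurable and compactly supported. Then for all x, t ∈ ℝ^d, the variance of |det H| · (1/n) ∑_{i=1}^n K_H(X_i − x) K_H(X_i − t) is at most (1/(n·|det H|)) ∫_{ℝ^d} K(p)² · K(p − H⁻¹(x − t))² · f(t + Hp) dp. -/

import Mathlib

open MeasureTheory ProbabilityTheory Filter
open scoped ENNReal NNReal Topology

noncomputable section

/-- The rescaled kernel `K_H(v) = |det H|⁻¹ * K (H⁻¹ v)`. -/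
def kernelScaled {d : ℕ} (H : Matrix (Fin d) (Fin d) ℝ) (K : (Fin d → ℝ) → ℝ)
    (v : Fin d → ℝ) : ℝ :=
  |H.det|⁻¹ * K (H⁻¹.mulVec v)

/-!
With `ψ y = K_H(y - x) K_H(y - t)` the statistic is `|det H| n⁻¹ ∑ ψ(Xᵢ)`. Pairwise independence
makes its variance `|det H|² n⁻² ∑ Var ψ(Xᵢ) ≤ |det H|² n⁻¹ ∫ ψ² f`, and the substitution
`y = t + H p` turns `∫ ψ² f` into `|det H|⁻³ ∫ K(p)² K(p - H⁻¹(x - t))² f(t + H p) dp`.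
-/

open Matrix

theorem integral_comp_add_mulVec {d : ℕ} {F : Type*} [NormedAddCommGroup F] [NormedSpace ℝ F]
    {H : Matrix (Fin d) (Fin d) ℝ} (hH : H.det ≠ 0) (t : Fin d → ℝ) (g : (Fin d → ℝ) → F) :
    ∫ p, g (t + H *ᵥ p) = |H.det|⁻¹ • ∫ y, g y := by
  have hdet : LinearMap.det (toLin' H) = H.det := LinearMap.det_toLin' H
  have hemb : MeasurableEmbedding (toLin' H) :=
    (LinearMap.isClosedEmbedding_of_injective (LinearMap.ker_eq_bot.2
      (mulVec_injective_of_isUnit ((isUnit_iff_isUnit_det H).2 hH.isUnit)))).measurableEmbedding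
  calc ∫ p, g (t + H *ᵥ p) = ∫ y, g (t + y) ∂(Measure.map (toLin' H) volume) :=
        (hemb.integral_map fun y => g (t + y)).symm
    _ = |H.det|⁻¹ • ∫ y, g y := by
        rw [Real.map_linearMap_volume_pi_eq_smul_volume_pi (by rwa [hdet]), integral_smul_measure,
          integral_add_left_eq_self, hdet, ENNReal.toReal_ofReal (abs_nonneg _), abs_inv]

theorem integral_withDensity_ofReal {α E : Type*} [MeasurableSpace α] [NormedAddCommGroup E]
    [NormedSpace ℝ E] {ν : Measure α} {f : α → ℝ} (hf : Measurable f) (hf₀ : ∀ y, 0 ≤ f y)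
    (g : α → E) :
    ∫ y, g y ∂ν.withDensity (fun y => ENNReal.ofReal (f y)) = ∫ y, f y • g y ∂ν := by
  rw [integral_withDensity_eq_integral_toReal_smul hf.ennreal_ofReal
    (ae_of_all _ fun _ => ENNReal.ofReal_lt_top)]
  simp_rw [ENNReal.toReal_ofReal (hf₀ _)]

theorem variance_sum_comp_le {ι Ω E : Type*} {mΩ : MeasurableSpace Ω} [MeasurableSpace E]
    {μ : Measure Ω} [IsProbabilityMeasure μ] {X : ι → Ω → E} (hX : ∀ i, Measurable (X i))
    (hindep : Pairwise fun i j => IndepFun (X i) (X j) μ) {φ : E → ℝ} (hφ : Measurable φ)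
    (s : Finset ι) (hφL2 : ∀ i ∈ s, MemLp φ 2 (μ.map (X i))) :
    variance (fun ω => ∑ i ∈ s, φ (X i ω)) μ ≤ ∑ i ∈ s, ∫ y, φ y ^ 2 ∂(μ.map (X i)) := by
  have hL2 : ∀ i ∈ s, MemLp (fun ω => φ (X i ω)) 2 μ :=
    fun i hi => (hφL2 i hi).comp_of_map (hX i).aemeasurable
  have hsum : (fun ω => ∑ i ∈ s, φ (X i ω)) = ∑ i ∈ s, fun ω => φ (X i ω) := by
    ext ω; simp
  rw [hsum, IndepFun.variance_sum hL2 fun i _ j _ hij => (hindep hij).comp hφ hφ]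
  gcongr with i hi
  calc variance (fun ω => φ (X i ω)) μ ≤ μ[(fun ω => φ (X i ω)) ^ 2] :=
        variance_le_expectation_sq (hL2 i hi).1
    _ = ∫ y, φ y ^ 2 ∂(μ.map (X i)) :=
        (integral_map (hX i).aemeasurable (hφ.pow_const 2).aestronglyMeasurable).symm

section kernelScaled

variable {d : ℕ} {H : Matrix (Fin d) (Fin d) ℝ} {K : (Fin d → ℝ) → ℝ}

theorem measurable_kernelScaled (hK : Measurable K) : Measurable (kernelScaled H K) :=
  measurable_const.mul (hK.comp (toLin' H⁻¹).continuous_of_finiteDimensional.measurable)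

theorem abs_kernelScaled_le {C : ℝ} (hC : ∀ u, |K u| ≤ C) (v : Fin d → ℝ) :
    |kernelScaled H K v| ≤ |H.det|⁻¹ * C := by
  rw [kernelScaled, abs_mul, abs_inv, abs_abs]
  exact mul_le_mul_of_nonneg_left (hC _) (inv_nonneg.2 (abs_nonneg _))

theorem integral_mul_sq_kernelScaled_mul_kernelScaled (hH : H.det ≠ 0) (g : (Fin d → ℝ) → ℝ)
    (x t : Fin d → ℝ) :
    ∫ y, g y * (kernelScaled H K (y - x) * kernelScaled H K (y - t)) ^ 2 =
      (|H.det| ^ 3)⁻¹ * ∫ p, K p ^ 2 * K (p - H⁻¹ *ᵥ (x - t)) ^ 2 * g (t + H *ᵥ p) := by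
  set ψ : (Fin d → ℝ) → ℝ := fun y => K (H⁻¹ *ᵥ (y - x)) ^ 2 * K (H⁻¹ *ᵥ (y - t)) ^ 2 * g y
  have hinv : ∀ p, H⁻¹ *ᵥ (H *ᵥ p) = p := fun p => by
    rw [mulVec_mulVec, nonsing_inv_mul H (isUnit_iff_ne_zero.2 hH), one_mulVec]
  have hψ : ∀ p, ψ (t + H *ᵥ p) = K p ^ 2 * K (p - H⁻¹ *ᵥ (x - t)) ^ 2 * g (t + H *ᵥ p) := by
    intro p
    simp only [ψ]
    rw [show t + H *ᵥ p - x = H *ᵥ p - (x - t) by abel, add_sub_cancel_left, mulVec_sub, hinv]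
    ring
  have ha : |H.det| ≠ 0 := abs_ne_zero.2 hH
  calc ∫ y, g y * (kernelScaled H K (y - x) * kernelScaled H K (y - t)) ^ 2
      = (|H.det| ^ 4)⁻¹ * ∫ y, ψ y := by
        rw [← integral_const_mul]
        congr 1 with y
        simp only [kernelScaled, ψ]
        field_simp
    _ = (|H.det| ^ 3)⁻¹ * ∫ p, ψ (t + H *ᵥ p) := by
        rw [integral_comp_add_mulVec hH, smul_eq_mul]
        field_simp
    _ = _ := by simp_rw [hψ]

end kernelScaled

theorem variance_W2n_general {d n : ℕ}
    {Ω : Type*} [MeasurableSpace Ω] (μ : Measure Ω) [IsProbabilityMeasure μ]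
    (X : Fin n → Ω → (Fin d → ℝ)) (hXmeas : ∀ i, Measurable (X i))
    (hindep : iIndepFun X μ)
    (f : (Fin d → ℝ) → ℝ) (hfmeas : Measurable f) (hfnonneg : ∀ y, 0 ≤ f y)
    (hlaw : ∀ i, μ.map (X i) = volume.withDensity (fun y => ENNReal.ofReal (f y)))
    (H : Matrix (Fin d) (Fin d) ℝ) (hH : H.det ≠ 0)
    (K : (Fin d → ℝ) → ℝ) (hKmeas : Measurable K) (hKbd : ∃ C, ∀ u, |K u| ≤ C)
    (x t : Fin d → ℝ) :
    variance (fun ω => |H.det| *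
        ((n : ℝ)⁻¹ * ∑ i, kernelScaled H K (X i ω - x) * kernelScaled H K (X i ω - t))) μ ≤
      ((n : ℝ) * |H.det|)⁻¹ *
        ∫ p, (K p) ^ 2 * (K (p - H⁻¹.mulVec (x - t))) ^ 2 * f (t + H.mulVec p) := by
  obtain ⟨C, hC⟩ := hKbd
  set ψ : (Fin d → ℝ) → ℝ := fun y => kernelScaled H K (y - x) * kernelScaled H K (y - t)
  have hψ : Measurable ψ :=
    ((measurable_kernelScaled hKmeas).comp (measurable_id.sub_const x)).mul
      ((measurable_kernelScaled hKmeas).comp (measurable_id.sub_const t))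
  have hψL2 : ∀ i, MemLp ψ 2 (μ.map (X i)) := fun i =>
    MemLp.of_bound hψ.aestronglyMeasurable _ (ae_of_all _ fun y => by
      simpa only [ψ, Real.norm_eq_abs, abs_mul] using
        mul_le_mul (abs_kernelScaled_le hC _) (abs_kernelScaled_le hC _) (abs_nonneg _)
          ((abs_nonneg _).trans (abs_kernelScaled_le hC 0)))
  calc variance _ μ = (|H.det| * (n : ℝ)⁻¹) ^ 2 * variance (fun ω => ∑ i, ψ (X i ω)) μ := by
        simp_rw [← mul_assoc]; exact variance_const_mul _ _ μ
    _ ≤ (|H.det| * (n : ℝ)⁻¹) ^ 2 * ∑ i, ∫ y, ψ y ^ 2 ∂(μ.map (X i)) := by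
        gcongr
        exact variance_sum_comp_le hXmeas (fun i j hij => hindep.indepFun hij) hψ _
          fun i _ => hψL2 i
    _ = (|H.det| * (n : ℝ)⁻¹) ^ 2 * (n * ((|H.det| ^ 3)⁻¹ *
          ∫ p, K p ^ 2 * K (p - H⁻¹ *ᵥ (x - t)) ^ 2 * f (t + H *ᵥ p))) := by
        simp_rw [hlaw, integral_withDensity_ofReal hfmeas hfnonneg, smul_eq_mul, ψ,
          integral_mul_sq_kernelScaled_mul_kernelScaled hH, Finset.sum_const, Finset.card_univ,
          Fintype.card_fin, nsmul_eq_mul]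
    _ = _ := by
        rcases eq_or_ne (n : ℝ) 0 with hn₀ | hn₀
        · simp [hn₀]
        · field_simp [abs_ne_zero.2 hH]

/-- Variance bound in Lemma 2:
`Var(|det H| W₂ₙ(x,t)) ≤ (1/(n |det H|)) ∫ K(p)² K(p − H⁻¹(x−t))² f(t + Hp) dp`. -/
theorem variance_W2n {d n : ℕ} (hd : 1 ≤ d) (hn : 1 ≤ n)
    {Ω : Type*} [MeasurableSpace Ω] (μ : Measure Ω) [IsProbabilityMeasure μ]
    (X : Fin n → Ω → (Fin d → ℝ)) (hXmeas : ∀ i, Measurable (X i))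
    (hindep : iIndepFun X μ)
    (f : (Fin d → ℝ) → ℝ) (hfmeas : Measurable f) (hfnonneg : ∀ y, 0 ≤ f y)
    (hlaw : ∀ i, μ.map (X i) = volume.withDensity (fun y => ENNReal.ofReal (f y)))
    (H : Matrix (Fin d) (Fin d) ℝ) (hH : H.det ≠ 0)
    (K : (Fin d → ℝ) → ℝ) (hKmeas : Measurable K) (hKbd : ∃ C, ∀ u, |K u| ≤ C)
    (hKsupp : HasCompactSupport K)
    (x t : Fin d → ℝ) :
    variance (fun ω => |H.det| *
        ((n : ℝ)⁻¹ * ∑ i, kernelScaled H K (X i ω - x) * kernelScaled H K (X i ω - t))) μ ≤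
      ((n : ℝ) * |H.det|)⁻¹ *
        ∫ p, (K p) ^ 2 * (K (p - H⁻¹.mulVec (x - t))) ^ 2 * f (t + H.mulVec p) :=
  variance_W2n_general μ X hXmeas hindep f hfmeas hfnonneg hlaw H hH K hKmeas hKbd x t
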